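/- arXiv:2509.09000 — 13 statements merged into one kernel-verified Lean document; each statement's English description precedes it below -/
import Mathlib

section
/- If R0 > 1, then the quadratic f has exactly one positive real root, namely I2 = (−A1 + √Δ)/(2A2); i.e., f(I2) = 0, I2 > 0, and every I > 0 with f(I) = 0 equals I2. -/
/-! `R₀ > 1` makes the constant term `A₀` negative, while `A₂ > 0`. A quadratic with positive
leading coefficient and negative constant term has roots of opposite signs (their product is
`c / a < 0`), and since then `|b| < √(b² - 4ac)`, the positive one is the one taken with `+√Δ`. -/

section QuadraticPositiveRoot

variable {a b c : ℝ}

theorem sq_lt_discrim (hac : a * c < 0) : b ^ 2 < discrim a b c := by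
  rw [discrim]; linarith

theorem abs_lt_sqrt_discrim (hac : a * c < 0) : |b| < √(discrim a b c) := by
  rw [Real.lt_sqrt (abs_nonneg b), sq_abs]
  exact sq_lt_discrim hac

theorem quadratic_root_add_sqrt_pos (ha : 0 < a) (hc : c < 0) :
    0 < (-b + √(discrim a b c)) / (2 * a) := by
  have := abs_lt_sqrt_discrim (b := b) (mul_neg_of_pos_of_neg ha hc)
  have : 0 < -b + √(discrim a b c) := by linarith [le_abs_self b]
  positivity

theorem quadratic_root_sub_sqrt_neg (ha : 0 < a) (hc : c < 0) :
    (-b - √(discrim a b c)) / (2 * a) < 0 := by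
  have := abs_lt_sqrt_discrim (b := b) (mul_neg_of_pos_of_neg ha hc)
  exact div_neg_of_neg_of_pos (by linarith [neg_abs_le b]) (by positivity)

theorem quadratic_eq_zero_iff_of_pos (ha : 0 < a) (hc : c < 0) {x : ℝ} (hx : 0 < x) :
    a * x ^ 2 + b * x + c = 0 ↔ x = (-b + √(discrim a b c)) / (2 * a) := by
  have hdiscrim_nonneg : 0 ≤ discrim a b c :=
    (sq_nonneg b).trans (sq_lt_discrim (mul_neg_of_pos_of_neg ha hc)).le
  have hdiscrim := (Real.mul_self_sqrt hdiscrim_nonneg).symm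
  rw [sq, quadratic_eq_zero_iff ha.ne' hdiscrim, or_iff_left]
  exact (quadratic_root_sub_sqrt_neg ha hc).trans hx |>.ne'

end QuadraticPositiveRoot

theorem stmt1_general (d β b μ0 μ1 : ℝ)
    (hd : 0 < d) (hβ : 0 < β) (hb : 0 < b)
    (hμ0 : 0 < μ0) (hμ1 : 0 < μ1)
    (R0 : ℝ)
    (A2 A1 A0 Δ : ℝ)
    (hA2 : A2 = (d + μ0) * β)
    (hA0 : A0 = b * d * (d + μ1) * (1 - R0))
    (hΔ : Δ = A1 ^ 2 - 4 * A2 * A0)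
    (f : ℝ → ℝ) (hf : ∀ I, f I = A2 * I ^ 2 + A1 * I + A0)
    (I2 : ℝ) (hI2 : I2 = (-A1 + Real.sqrt Δ) / (2 * A2))
    (hR0gt : 1 < R0) :
    f I2 = 0 ∧ 0 < I2 ∧ ∀ I : ℝ, 0 < I → f I = 0 → I = I2 := by
  have hA2pos : 0 < A2 := by rw [hA2]; positivity
  have hA0neg : A0 < 0 := by
    rw [hA0]; exact mul_neg_of_pos_of_neg (by positivity) (by linarith)
  replace hI2 : I2 = (-A1 + √(discrim A2 A1 A0)) / (2 * A2) := by rw [hI2, hΔ, discrim]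
  have hI2pos : 0 < I2 := hI2 ▸ quadratic_root_add_sqrt_pos hA2pos hA0neg
  refine ⟨?_, hI2pos, fun I hI hfI => ?_⟩
  · rw [hf, quadratic_eq_zero_iff_of_pos hA2pos hA0neg hI2pos]
    exact hI2
  · rwa [hf, quadratic_eq_zero_iff_of_pos hA2pos hA0neg hI, ← hI2] at hfI

/-- If `R₀ > 1`, then the quadratic `f` has exactly one positive
real root, namely `I₂ = (−A₁ + √Δ)/(2A₂)`. -/
theorem stmt1 (A d β b μ0 μ1 : ℝ)
    (hA : 0 < A) (hd : 0 < d) (hβ : 0 < β) (hb : 0 < b)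
    (hμ0 : 0 < μ0) (hμ1 : 0 < μ1) (hμ : μ0 < μ1)
    (R0 : ℝ) (hR0 : R0 = β * A / (d * (d + μ1)))
    (A2 A1 A0 Δ : ℝ)
    (hA2 : A2 = (d + μ0) * β)
    (hA1 : A1 = d ^ 2 + (b * β + μ0) * d + (b * μ1 - A) * β)
    (hA0 : A0 = b * d * (d + μ1) * (1 - R0))
    (hΔ : Δ = A1 ^ 2 - 4 * A2 * A0)
    (f : ℝ → ℝ) (hf : ∀ I, f I = A2 * I ^ 2 + A1 * I + A0)
    (I2 : ℝ) (hI2 : I2 = (-A1 + Real.sqrt Δ) / (2 * A2))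
    (hR0gt : 1 < R0) :
    f I2 = 0 ∧ 0 < I2 ∧ ∀ I : ℝ, 0 < I → f I = 0 → I = I2 :=
  stmt1_general d β b μ0 μ1 hd hβ hb hμ0 hμ1 R0 A2 A1 A0 Δ hA2 hA0 hΔ f hf I2 hI2 hR0gt
end

section
/- If R0 = 1 and A1 < 0, then the quadratic f has exactly one positive real root, namely I2 = −A1/A2. -/
theorem mul_sq_add_mul_eq_zero_iff {K : Type*} [Field K] {a c x : K} (ha : a ≠ 0) :
    a * x ^ 2 + c * x = 0 ↔ x = 0 ∨ x = -c / a := by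
  have hfactor : a * x ^ 2 + c * x = x * (a * (x - -c / a)) := by field_simp; ring
  rw [hfactor, mul_eq_zero, mul_eq_zero, sub_eq_zero]
  exact or_congr_right (or_iff_right ha)

theorem stmt2_general (d β b μ0 μ1 : ℝ)
    (hd : 0 < d) (hβ : 0 < β)
    (hμ0 : 0 < μ0)
    (R0 : ℝ)
    (A2 A1 A0 : ℝ)
    (hA2 : A2 = (d + μ0) * β)
    (hA0 : A0 = b * d * (d + μ1) * (1 - R0))
    (f : ℝ → ℝ) (hf : ∀ I, f I = A2 * I ^ 2 + A1 * I + A0)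
    (I2 : ℝ) (hI2 : I2 = -A1 / A2)
    (hR0eq : R0 = 1) (hA1neg : A1 < 0) :
    f I2 = 0 ∧ 0 < I2 ∧ ∀ I : ℝ, 0 < I → f I = 0 → I = I2 := by
  have hA2pos : 0 < A2 := hA2 ▸ by positivity
  have hf_eq : ∀ I, f I = A2 * I ^ 2 + A1 * I := by
    intro I
    rw [hf, hA0, hR0eq]
    ring
  subst hI2
  refine ⟨?_, div_pos (neg_pos.2 hA1neg) hA2pos, fun I hI hfI ↦ ?_⟩
  · rw [hf_eq, mul_sq_add_mul_eq_zero_iff hA2pos.ne']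
    exact Or.inr rfl
  · rw [hf_eq, mul_sq_add_mul_eq_zero_iff hA2pos.ne'] at hfI
    exact hfI.resolve_left hI.ne'

/-- If `R₀ = 1` and `A₁ < 0`, then the quadratic `f` has exactly
one positive real root, namely `I₂ = −A₁/A₂`. -/
theorem stmt2 (A d β b μ0 μ1 : ℝ)
    (hA : 0 < A) (hd : 0 < d) (hβ : 0 < β) (hb : 0 < b)
    (hμ0 : 0 < μ0) (hμ1 : 0 < μ1) (hμ : μ0 < μ1)
    (R0 : ℝ) (hR0 : R0 = β * A / (d * (d + μ1)))
    (A2 A1 A0 : ℝ)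
    (hA2 : A2 = (d + μ0) * β)
    (hA1 : A1 = d ^ 2 + (b * β + μ0) * d + (b * μ1 - A) * β)
    (hA0 : A0 = b * d * (d + μ1) * (1 - R0))
    (f : ℝ → ℝ) (hf : ∀ I, f I = A2 * I ^ 2 + A1 * I + A0)
    (I2 : ℝ) (hI2 : I2 = -A1 / A2)
    (hR0eq : R0 = 1) (hA1neg : A1 < 0) :
    f I2 = 0 ∧ 0 < I2 ∧ ∀ I : ℝ, 0 < I → f I = 0 → I = I2 :=
  stmt2_general d β b μ0 μ1 hd hβ hμ0 R0 A2 A1 A0 hA2 hA0 f hf I2 hI2 hR0eq hA1neg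
end

section
/- If R0 < 1, A1 < 0 and Δ > 0, then the quadratic f has exactly two positive real roots, namely I1 = (−A1 − √Δ)/(2A2) and I2 = (−A1 + √Δ)/(2A2), with 0 < I1 < I2. If instead R0 < 1, A1 < 0 and Δ = 0, then f has a unique positive real root I* = −A1/(2A2), which is a double root (f(I*) = 0 and f'(I*) = 0, where f'(I) = 2A2·I + A1). -/
/-- If `R₀ < 1`, `A₁ < 0` and `Δ > 0`, the quadratic `f` has
exactly two positive roots `0 < I₁ < I₂` given by `(−A₁ ∓ √Δ)/(2A₂)`.
If instead `R₀ < 1`, `A₁ < 0` and `Δ = 0`, then `f` has a unique positive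
root `I* = −A₁/(2A₂)`, which is a double root: `f(I*) = 0` and `f'(I*) = 0`
where `f'(I) = 2A₂ I + A₁`. -/
theorem stmt3 (A d β b μ0 μ1 : ℝ)
    (hA : 0 < A) (hd : 0 < d) (hβ : 0 < β) (hb : 0 < b)
    (hμ0 : 0 < μ0) (hμ1 : 0 < μ1) (hμ : μ0 < μ1)
    (R0 : ℝ) (hR0 : R0 = β * A / (d * (d + μ1)))
    (A2 A1 A0 Δ : ℝ)
    (hA2 : A2 = (d + μ0) * β)
    (hA1 : A1 = d ^ 2 + (b * β + μ0) * d + (b * μ1 - A) * β)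
    (hA0 : A0 = b * d * (d + μ1) * (1 - R0))
    (hΔ : Δ = A1 ^ 2 - 4 * A2 * A0)
    (f f' : ℝ → ℝ)
    (hf : ∀ I, f I = A2 * I ^ 2 + A1 * I + A0)
    (hf' : ∀ I, f' I = 2 * A2 * I + A1)
    (I1 I2 Istar : ℝ)
    (hI1 : I1 = (-A1 - Real.sqrt Δ) / (2 * A2))
    (hI2 : I2 = (-A1 + Real.sqrt Δ) / (2 * A2))
    (hIstar : Istar = -A1 / (2 * A2))
    (hR0lt : R0 < 1) (hA1neg : A1 < 0) :
    (0 < Δ →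
      0 < I1 ∧ I1 < I2 ∧ f I1 = 0 ∧ f I2 = 0 ∧
        ∀ I : ℝ, 0 < I → f I = 0 → I = I1 ∨ I = I2) ∧
    (Δ = 0 →
      0 < Istar ∧ f Istar = 0 ∧ f' Istar = 0 ∧
        ∀ I : ℝ, 0 < I → f I = 0 → I = Istar) := by
  have hA2pos : 0 < A2 := by rw [hA2]; positivity
  have hA0pos : 0 < A0 := by
    rw [hA0]; have : 0 < 1 - R0 := by linarith
    positivity
  constructor
  · intro hΔpos
    have hs : Real.sqrt Δ ^ 2 = Δ := Real.sq_sqrt hΔpos.le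
    have hspos : 0 < Real.sqrt Δ := Real.sqrt_pos.mpr hΔpos
    have hslt : Real.sqrt Δ < -A1 := by nlinarith [hs, hΔ]
    have hI1pos : 0 < I1 := by
      rw [hI1]; apply div_pos <;> linarith
    have hI12 : I1 < I2 := by
      rw [hI1, hI2]
      exact (div_lt_div_iff_of_pos_right (by positivity)).mpr (by linarith)
    have key : ∀ I, f I = A2 * (I - I1) * (I - I2) := by
      intro I
      rw [hf, hI1, hI2]
      have h2 : (2 * A2) ≠ 0 := by positivity
      field_simp
      nlinarith [hs, hΔ]
    refine ⟨hI1pos, hI12, ?_, ?_, ?_⟩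
    · rw [key]; ring
    · rw [key]; ring
    · intro I _ hfI
      rw [key] at hfI
      rcases mul_eq_zero.mp hfI with h | h
      · rcases mul_eq_zero.mp h with h | h
        · exact absurd h (ne_of_gt hA2pos)
        · left; linarith
      · right; linarith
  · intro hΔ0
    have hsq : A1 ^ 2 = 4 * A2 * A0 := by rw [hΔ] at hΔ0; linarith
    have hIpos : 0 < Istar := by
      rw [hIstar]; apply div_pos <;> linarith
    have key : ∀ I, f I = A2 * (I - Istar) ^ 2 := by
      intro I
      rw [hf, hIstar]
      have h2 : (2 * A2) ≠ 0 := by positivity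
      field_simp
      linear_combination (-1) * hsq
    refine ⟨hIpos, ?_, ?_, ?_⟩
    · rw [key]; ring
    · rw [hf', hIstar]; field_simp; ring
    · intro I _ hfI
      rw [key] at hfI
      rcases mul_eq_zero.mp hfI with h | h
      · exact absurd h (ne_of_gt hA2pos)
      · have := pow_eq_zero_iff (n := 2) (by norm_num) |>.mp h
        linarith
end

section
/- If either (R0 ≤ 1 and A1 ≥ 0) or (R0 < 1 and Δ < 0), then the quadratic f has no positive real root, i.e., f(I) ≠ 0 for every I > 0. -/
theorem quadratic_pos_of_coeffs_nonneg {R : Type*} [Semiring R] [PartialOrder R]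
    [IsStrictOrderedRing R] {a b c x : R} (ha : 0 < a) (hb : 0 ≤ b) (hc : 0 ≤ c) (hx : 0 < x) :
    0 < a * x ^ 2 + b * x + c := by
  positivity

theorem quadratic_ne_zero_of_discrim_neg {R : Type*} [CommRing R] [LinearOrder R]
    [IsOrderedRing R] {a b c : R} (h : discrim a b c < 0) (x : R) :
    a * x ^ 2 + b * x + c ≠ 0 := by
  rw [sq]
  exact quadratic_ne_zero_of_discrim_ne_sq (fun s hs => (sq_nonneg s).not_gt (hs ▸ h)) x

theorem stmt4_general (d β b μ0 μ1 : ℝ)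
    (hd : 0 < d) (hβ : 0 < β) (hb : 0 < b)
    (hμ0 : 0 < μ0) (hμ1 : 0 < μ1)
    (R0 : ℝ)
    (A2 A1 A0 Δ : ℝ)
    (hA2 : A2 = (d + μ0) * β)
    (hA0 : A0 = b * d * (d + μ1) * (1 - R0))
    (hΔ : Δ = A1 ^ 2 - 4 * A2 * A0)
    (f : ℝ → ℝ) (hf : ∀ I, f I = A2 * I ^ 2 + A1 * I + A0)
    (hcase : (R0 ≤ 1 ∧ 0 ≤ A1) ∨ (R0 < 1 ∧ Δ < 0)) :
    ∀ I : ℝ, 0 < I → f I ≠ 0 := by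
  intro I hI
  rw [hf]
  rcases hcase with ⟨hR0, hA1⟩ | ⟨-, hΔneg⟩
  · have hA2pos : 0 < A2 := hA2 ▸ by positivity
    have hA0nonneg : 0 ≤ A0 := hA0 ▸ mul_nonneg (by positivity) (sub_nonneg.2 hR0)
    exact (quadratic_pos_of_coeffs_nonneg hA2pos hA1 hA0nonneg hI).ne'
  · rw [hΔ] at hΔneg
    exact quadratic_ne_zero_of_discrim_neg hΔneg I

/-- If either (`R₀ ≤ 1` and `A₁ ≥ 0`) or (`R₀ < 1` and `Δ < 0`),
then the quadratic `f` has no positive real root. -/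
theorem stmt4 (A d β b μ0 μ1 : ℝ)
    (hA : 0 < A) (hd : 0 < d) (hβ : 0 < β) (hb : 0 < b)
    (hμ0 : 0 < μ0) (hμ1 : 0 < μ1) (hμ : μ0 < μ1)
    (R0 : ℝ) (hR0 : R0 = β * A / (d * (d + μ1)))
    (A2 A1 A0 Δ : ℝ)
    (hA2 : A2 = (d + μ0) * β)
    (hA1 : A1 = d ^ 2 + (b * β + μ0) * d + (b * μ1 - A) * β)
    (hA0 : A0 = b * d * (d + μ1) * (1 - R0))
    (hΔ : Δ = A1 ^ 2 - 4 * A2 * A0)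
    (f : ℝ → ℝ) (hf : ∀ I, f I = A2 * I ^ 2 + A1 * I + A0)
    (hcase : (R0 ≤ 1 ∧ 0 ≤ A1) ∨ (R0 < 1 ∧ Δ < 0)) :
    ∀ I : ℝ, 0 < I → f I ≠ 0 :=
  stmt4_general d β b μ0 μ1 hd hβ hb hμ0 hμ1 R0 A2 A1 A0 Δ hA2 hA0 hΔ f hf hcase
end

section
/- Let I > 0 satisfy f(I) = 0. Then the determinant of the Jacobian at the corresponding equilibrium satisfies det J0(S(I), I) = (d + βI)·h'(I)·I + β·(h(I) + d)·I = I·f'(I)/(I + b), where f'(I) = 2A2·I + A1. -/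
/-- Let `I > 0` satisfy `f(I) = 0`. Then the determinant of the
Jacobian `J₀(S(I), I)` (rows `[−(d+βI), −(h(I)+d)]` and `[βI, −h'(I)·I]`)
satisfies `det J₀(S(I), I) = (d + βI)·h'(I)·I + β·(h(I) + d)·I
= I·f'(I)/(I + b)`, where `f'(I) = 2A₂·I + A₁`. -/
theorem stmt7 (A d β b μ0 μ1 : ℝ)
    (hA : 0 < A) (hd : 0 < d) (hβ : 0 < β) (hb : 0 < b)
    (hμ0 : 0 < μ0) (hμ1 : 0 < μ1) (hμ : μ0 < μ1)
    (R0 : ℝ) (hR0 : R0 = β * A / (d * (d + μ1)))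
    (A2 A1 A0 : ℝ)
    (hA2 : A2 = (d + μ0) * β)
    (hA1 : A1 = d ^ 2 + (b * β + μ0) * d + (b * μ1 - A) * β)
    (hA0 : A0 = b * d * (d + μ1) * (1 - R0))
    (f f' h h' : ℝ → ℝ)
    (hf : ∀ I, f I = A2 * I ^ 2 + A1 * I + A0)
    (hf' : ∀ I, f' I = 2 * A2 * I + A1)
    (hh : ∀ I, h I = μ0 + (μ1 - μ0) * b / (I + b))
    (hh' : ∀ I, h' I = -((μ1 - μ0) * b / (I + b) ^ 2))
    (J : ℝ → Matrix (Fin 2) (Fin 2) ℝ)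
    (hJ : ∀ I, J I = !![-(d + β * I), -(h I + d); β * I, -(h' I * I)])
    (I : ℝ) (hIpos : 0 < I) (hIroot : f I = 0) :
    (J I).det = (d + β * I) * h' I * I + β * (h I + d) * I ∧
    (J I).det = I * f' I / (I + b) := by
  have hIb : (I + b) ≠ 0 := by positivity
  have hdd : d * (d + μ1) ≠ 0 := by positivity
  rw [hf, hA0, hR0, hA2, hA1] at hIroot
  constructor
  · rw [hJ, Matrix.det_fin_two_of]; ring
  · rw [hJ, Matrix.det_fin_two_of, hf', hh, hh', hA2, hA1]
    field_simp at hIroot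
    linear_combination (norm := (field_simp; ring))
      (-I / ((I + b) ^ 2)) * hIroot
end

section
/- Suppose R0 < 1, A1 < 0, Δ > 0, and set I1 = (−A1 − √Δ)/(2A2), I2 = (−A1 + √Δ)/(2A2). Then det J0(S(I1), I1) < 0 — hence the matrix J0(S(I1), I1) has two real eigenvalues of opposite signs, i.e., E1 is a saddle point — while det J0(S(I2), I2) > 0, i.e., E2 is an anti-saddle. -/
set_option maxHeartbeats 1000000

lemma sqrt_disc_bound (t D : ℝ) (hD : D < 0) :
    -Real.sqrt (t ^ 2 - 4 * D) < t ∧ t < Real.sqrt (t ^ 2 - 4 * D) := by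
  have hdisc : 0 < t ^ 2 - 4 * D := by nlinarith [sq_nonneg t]
  have hs22 : Real.sqrt (t ^ 2 - 4 * D) ^ 2 = t ^ 2 - 4 * D := Real.sq_sqrt hdisc.le
  have hs2pos : 0 < Real.sqrt (t ^ 2 - 4 * D) := Real.sqrt_pos.mpr hdisc
  constructor <;> nlinarith [hs22, hs2pos]

lemma eig_aux (a bb c e lam : ℝ) (hbb : bb ≠ 0)
    (hroot : lam ^ 2 - (a + e) * lam + (a * e - bb * c) = 0) :
    ∃ v : Fin 2 → ℝ, v ≠ 0 ∧ (!![a, bb; c, e]).mulVec v = lam • v := by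
  refine ⟨![bb, lam - a], fun hv => hbb ?_, ?_⟩
  · simpa using congrFun hv 0
  · funext i
    fin_cases i
    · simp [Matrix.mulVec, dotProduct, Fin.sum_univ_two]
      ring
    · simp [Matrix.mulVec, dotProduct, Fin.sum_univ_two]
      linear_combination -hroot

/-- Suppose `R₀ < 1`, `A₁ < 0`, `Δ > 0`, and set
`I₁ = (−A₁ − √Δ)/(2A₂)`, `I₂ = (−A₁ + √Δ)/(2A₂)`. Then
`det J₀(S(I₁), I₁) < 0` — hence `J₀(S(I₁), I₁)` has two real eigenvalues of
opposite signs (`E₁` is a saddle) — while `det J₀(S(I₂), I₂) > 0`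
(`E₂` is an anti-saddle). -/
theorem stmt8 (A d β b μ0 μ1 : ℝ)
    (hA : 0 < A) (hd : 0 < d) (hβ : 0 < β) (hb : 0 < b)
    (hμ0 : 0 < μ0) (hμ1 : 0 < μ1) (hμ : μ0 < μ1)
    (R0 : ℝ) (hR0 : R0 = β * A / (d * (d + μ1)))
    (A2 A1 A0 Δ : ℝ)
    (hA2 : A2 = (d + μ0) * β)
    (hA1 : A1 = d ^ 2 + (b * β + μ0) * d + (b * μ1 - A) * β)
    (hA0 : A0 = b * d * (d + μ1) * (1 - R0))
    (hΔ : Δ = A1 ^ 2 - 4 * A2 * A0)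
    (h h' : ℝ → ℝ)
    (hh : ∀ I, h I = μ0 + (μ1 - μ0) * b / (I + b))
    (hh' : ∀ I, h' I = -((μ1 - μ0) * b / (I + b) ^ 2))
    (J : ℝ → Matrix (Fin 2) (Fin 2) ℝ)
    (hJ : ∀ I, J I = !![-(d + β * I), -(h I + d); β * I, -(h' I * I)])
    (I1 I2 : ℝ)
    (hI1 : I1 = (-A1 - Real.sqrt Δ) / (2 * A2))
    (hI2 : I2 = (-A1 + Real.sqrt Δ) / (2 * A2))
    (hR0lt : R0 < 1) (hA1neg : A1 < 0) (hΔpos : 0 < Δ) :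
    (J I1).det < 0 ∧
    (∃ lam1 lam2 : ℝ, lam1 < 0 ∧ 0 < lam2 ∧
      (∃ v : Fin 2 → ℝ, v ≠ 0 ∧ (J I1).mulVec v = lam1 • v) ∧
      (∃ v : Fin 2 → ℝ, v ≠ 0 ∧ (J I1).mulVec v = lam2 • v)) ∧
    0 < (J I2).det := by
  have hs2 : Real.sqrt Δ ^ 2 = Δ := Real.sq_sqrt hΔpos.le
  have hsΔ : 0 < Real.sqrt Δ := Real.sqrt_pos.mpr hΔpos
  have hA2pos : 0 < A2 := by rw [hA2]; positivity
  have hA0pos : 0 < A0 := by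
    rw [hA0]
    have h1 : 0 < 1 - R0 := by linarith
    positivity
  have hΔlt : Δ < A1 ^ 2 := by rw [hΔ]; nlinarith [mul_pos hA2pos hA0pos]
  have hslt : Real.sqrt Δ < -A1 := by
    have hy : (0:ℝ) < -A1 := by linarith
    have he : (-A1) ^ 2 = A1 ^ 2 := by ring
    exact (Real.sqrt_lt' hy).mpr (by linarith)
  have hI1pos : 0 < I1 := by
    rw [hI1]; apply div_pos (by linarith) (by linarith)
  have hI2pos : 0 < I2 := by
    rw [hI2]; apply div_pos (by linarith) (by linarith)
  have hIb1 : (0:ℝ) < I1 + b := by linarith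
  have hIb2 : (0:ℝ) < I2 + b := by linarith
  -- the key algebraic identity
  have hdetI : ∀ I : ℝ, 0 < I + b →
      (J I).det * (I + b) ^ 2
        = I * (2 * A2 * I + A1) * (I + b) - I * (A2 * I ^ 2 + A1 * I + A0) := by
    intro I hIb
    rw [hJ I, Matrix.det_fin_two_of, hh, hh', hA2, hA1, hA0, hR0]
    have hIb' : I + b ≠ 0 := ne_of_gt hIb
    have hd' : d ≠ 0 := ne_of_gt hd
    have hdm : d + μ1 ≠ 0 := by positivity
    field_simp
    ring
  -- roots of f
  have hfp1 : 2 * A2 * I1 + A1 = -Real.sqrt Δ := by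
    rw [hI1]; field_simp; ring
  have hfp2 : 2 * A2 * I2 + A1 = Real.sqrt Δ := by
    rw [hI2]; field_simp; ring
  have hA4 : (4 * A2) ≠ 0 := by positivity
  have hf1 : A2 * I1 ^ 2 + A1 * I1 + A0 = 0 := by
    have hsq : (2 * A2 * I1 + A1) ^ 2 = A1 ^ 2 - 4 * A2 * A0 := by
      rw [hfp1]; linear_combination hs2 + hΔ
    have h4 : 4 * A2 * (A2 * I1 ^ 2 + A1 * I1 + A0) = 0 := by linear_combination hsq
    exact (mul_eq_zero.mp h4).resolve_left hA4
  have hf2 : A2 * I2 ^ 2 + A1 * I2 + A0 = 0 := by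
    have hsq : (2 * A2 * I2 + A1) ^ 2 = A1 ^ 2 - 4 * A2 * A0 := by
      rw [hfp2]; linear_combination hs2 + hΔ
    have h4 : 4 * A2 * (A2 * I2 ^ 2 + A1 * I2 + A0) = 0 := by linear_combination hsq
    exact (mul_eq_zero.mp h4).resolve_left hA4
  have hdet1 : (J I1).det < 0 := by
    have hid := hdetI I1 hIb1
    rw [hf1, hfp1] at hid
    have hlt : I1 * -Real.sqrt Δ * (I1 + b) < 0 := by
      nlinarith [mul_pos (mul_pos hI1pos hsΔ) hIb1]
    nlinarith [sq_nonneg (I1 + b), mul_pos hIb1 hIb1]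
  have hdet2 : 0 < (J I2).det := by
    have hid := hdetI I2 hIb2
    rw [hf2, hfp2] at hid
    have hlt : 0 < I2 * Real.sqrt Δ * (I2 + b) :=
      mul_pos (mul_pos hI2pos hsΔ) hIb2
    nlinarith [sq_nonneg (I2 + b), mul_pos hIb2 hIb2]
  refine ⟨hdet1, ?_, hdet2⟩
  -- eigenvalues
  set a : ℝ := -(d + β * I1) with ha
  set bb : ℝ := -(h I1 + d) with hbb
  set c : ℝ := β * I1 with hc
  set e : ℝ := -(h' I1 * I1) with he
  have hbbneg : bb < 0 := by
    rw [hbb, hh]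
    have hX : 0 ≤ (μ1 - μ0) * b / (I1 + b) :=
      div_nonneg (by nlinarith) hIb1.le
    nlinarith
  have hbbne : bb ≠ 0 := ne_of_lt hbbneg
  have hDdet : (J I1).det = a * e - bb * c := by
    rw [hJ I1, Matrix.det_fin_two_of]
  set D : ℝ := a * e - bb * c with hD
  set t : ℝ := a + e with ht
  have hDneg : D < 0 := by rw [← hDdet]; exact hdet1
  have hdisc : 0 < t ^ 2 - 4 * D := by linarith [sq_nonneg t]
  set s2 : ℝ := Real.sqrt (t ^ 2 - 4 * D) with hs2def
  have hs22 : s2 ^ 2 = t ^ 2 - 4 * D := Real.sq_sqrt hdisc.le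
  have hs2pos : 0 < s2 := Real.sqrt_pos.mpr hdisc
  have hJmat : J I1 = !![a, bb; c, e] := hJ I1
  have hbd := sqrt_disc_bound t D hDneg
  have hts : t < s2 := hbd.2
  have hts' : -s2 < t := hbd.1
  refine ⟨(t - s2) / 2, (t + s2) / 2, by linarith, by linarith, ?_, ?_⟩
  · rw [hJmat]
    exact eig_aux a bb c e _ hbbne (by linear_combination (1/4 : ℝ) * hs22)
  · rw [hJmat]
    exact eig_aux a bb c e _ hbbne (by linear_combination (1/4 : ℝ) * hs22)
end

section
/- The derivative Ψ'(I) = 3βI² + 2(2bβ + d)I + (b²β + 2bd − bμ1 + bμ0) of the cubic Ψ has discriminant 4(2bβ + d)² − 12β·b(bβ + 2d − μ1 + μ0) = 4(bβ − d)² + 12bβ(μ1 − μ0) > 0; hence Ψ' has two distinct real roots, i.e., Ψ always has two humps. -/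
theorem exists_lt_quadratic_eq_zero {K : Type*} [Field K] [LinearOrder K] [IsStrictOrderedRing K]
    {a b c s : K} (ha : a ≠ 0) (hs : discrim a b c = s * s) (hs₀ : s ≠ 0) :
    ∃ x y, x < y ∧ a * (x * x) + b * x + c = 0 ∧ a * (y * y) + b * y + c = 0 := by
  have hroot (x : K) := quadratic_eq_zero_iff ha hs x
  have hne : (-b + s) / (2 * a) ≠ (-b - s) / (2 * a) := by
    intro h
    field_simp at h
    exact hs₀ (by linarith)
  rcases hne.lt_or_gt with hlt | hgt
  · exact ⟨_, _, hlt, (hroot _).2 (.inl rfl), (hroot _).2 (.inr rfl)⟩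
  · exact ⟨_, _, hgt, (hroot _).2 (.inr rfl), (hroot _).2 (.inl rfl)⟩

theorem Real.exists_lt_quadratic_eq_zero_of_discrim_pos {a b c : ℝ} (ha : a ≠ 0)
    (h : 0 < discrim a b c) :
    ∃ x y, x < y ∧ a * (x * x) + b * x + c = 0 ∧ a * (y * y) + b * y + c = 0 :=
  exists_lt_quadratic_eq_zero ha (Real.mul_self_sqrt h.le).symm (Real.sqrt_pos.2 h).ne'

theorem stmt9_general (d β b μ0 μ1 : ℝ)
    (hβ : 0 < β) (hb : 0 < b)
    (hμ : μ0 < μ1)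
    (Ψ' : ℝ → ℝ)
    (hΨ' : ∀ I, Ψ' I = 3 * β * I ^ 2 + 2 * (2 * b * β + d) * I
      + (b ^ 2 * β + 2 * b * d - b * μ1 + b * μ0)) :
    4 * (2 * b * β + d) ^ 2
        - 12 * β * (b * (b * β + 2 * d - μ1 + μ0))
      = 4 * (b * β - d) ^ 2 + 12 * b * β * (μ1 - μ0) ∧
    0 < 4 * (b * β - d) ^ 2 + 12 * b * β * (μ1 - μ0) ∧
    ∃ x y : ℝ, x < y ∧ Ψ' x = 0 ∧ Ψ' y = 0 := by
  have hdisc : discrim (3 * β) (2 * (2 * b * β + d)) (b ^ 2 * β + 2 * b * d - b * μ1 + b * μ0)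
      = 4 * (b * β - d) ^ 2 + 12 * b * β * (μ1 - μ0) := by
    rw [discrim]; ring
  have hpos : 0 < 4 * (b * β - d) ^ 2 + 12 * b * β * (μ1 - μ0) := by
    have := sub_pos.2 hμ
    positivity
  obtain ⟨x, y, hxy, hx, hy⟩ :=
    Real.exists_lt_quadratic_eq_zero_of_discrim_pos (by positivity) (hdisc ▸ hpos)
  refine ⟨by ring, hpos, x, y, hxy, ?_, ?_⟩
  · rw [hΨ']; linear_combination hx
  · rw [hΨ']; linear_combination hy

/-- The derivative `Ψ'(I) = 3βI² + 2(2bβ + d)I + (b²β + 2bd − bμ1 + bμ0)`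
of the cubic `Ψ` has discriminant
`4(2bβ + d)² − 12β·b(bβ + 2d − μ1 + μ0) = 4(bβ − d)² + 12bβ(μ1 − μ0) > 0`;
hence `Ψ'` has two distinct real roots, i.e., `Ψ` always has two humps. -/
theorem stmt9 (d β b μ0 μ1 : ℝ)
    (hd : 0 < d) (hβ : 0 < β) (hb : 0 < b)
    (hμ0 : 0 < μ0) (hμ1 : 0 < μ1) (hμ : μ0 < μ1)
    (Ψ Ψ' : ℝ → ℝ)
    (hΨ : ∀ I, Ψ I = β * I ^ 3 + (2 * b * β + d) * I ^ 2
      + (b ^ 2 * β + 2 * b * d - b * μ1 + b * μ0) * I + b ^ 2 * d)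
    (hΨ' : ∀ I, Ψ' I = 3 * β * I ^ 2 + 2 * (2 * b * β + d) * I
      + (b ^ 2 * β + 2 * b * d - b * μ1 + b * μ0)) :
    4 * (2 * b * β + d) ^ 2
        - 12 * β * (b * (b * β + 2 * d - μ1 + μ0))
      = 4 * (b * β - d) ^ 2 + 12 * b * β * (μ1 - μ0) ∧
    0 < 4 * (b * β - d) ^ 2 + 12 * b * β * (μ1 - μ0) ∧
    ∃ x y : ℝ, x < y ∧ Ψ' x = 0 ∧ Ψ' y = 0 :=
  stmt9_general d β b μ0 μ1 hβ hb hμ Ψ' hΨ'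
end

section
/- If bβ + 2d < μ1 − μ0 and μ1 − μ0 < ω, then Ψ(I) > 0 for every I > 0. -/
/-- If `bβ + 2d < μ1 − μ0` and `μ1 − μ0 < ω`, then `Ψ(I) > 0`
for every `I > 0`, where
`ω = (8b²β² + 20bβd − d² + √(d(8bβ + d)³))/(8bβ)`. -/
theorem stmt11 (d β b μ0 μ1 : ℝ)
    (hd : 0 < d) (hβ : 0 < β) (hb : 0 < b)
    (hμ0 : 0 < μ0) (hμ1 : 0 < μ1) (hμ : μ0 < μ1)
    (Ψ : ℝ → ℝ)
    (hΨ : ∀ I, Ψ I = β * I ^ 3 + (2 * b * β + d) * I ^ 2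
      + (b ^ 2 * β + 2 * b * d - b * μ1 + b * μ0) * I + b ^ 2 * d)
    (ω : ℝ)
    (hω : ω = (8 * b ^ 2 * β ^ 2 + 20 * b * β * d - d ^ 2
      + Real.sqrt (d * (8 * b * β + d) ^ 3)) / (8 * b * β))
    (hcond1 : b * β + 2 * d < μ1 - μ0)
    (hcond2 : μ1 - μ0 < ω) :
    ∀ I : ℝ, 0 < I → 0 < Ψ I := by
  intro I hI
  set s := Real.sqrt (d * (8 * b * β + d)) with hsdef
  have hsq : s ^ 2 = d * (8 * b * β + d) := Real.sq_sqrt (by positivity)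
  have hs0 : 0 ≤ s := Real.sqrt_nonneg _
  have hsd : d < s := by nlinarith [hsq, hs0, mul_pos hb hβ]
  have hbig : Real.sqrt (d * (8 * b * β + d) ^ 3) = (8 * b * β + d) * s := by
    rw [show d * (8 * b * β + d) ^ 3 = (8 * b * β + d) ^ 2 * (d * (8 * b * β + d)) by ring,
      Real.sqrt_mul (sq_nonneg _), Real.sqrt_sq (by positivity), hsdef]
  have h1 : 8 * b * β * (μ1 - μ0) < 8 * b ^ 2 * β ^ 2 + 20 * b * β * d - d ^ 2
      + (8 * b * β + d) * s := by
    rw [hω, hbig] at hcond2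
    rw [lt_div_iff₀ (by positivity : (0:ℝ) < 8 * b * β)] at hcond2
    linarith
  set t := (s - d) / (4 * β) with htdef
  have ht : 0 < t := by
    apply div_pos (by linarith) (by positivity)
  have hst : s = 4 * β * t + d := by
    rw [htdef]; field_simp; ring
  have hR : 2 * β * t ^ 2 + d * t = b * d := by
    have h := hsq
    rw [hst] at h
    nlinarith [h, hβ.ne', sq_nonneg (2 * β * t ^ 2 + d * t - b * d)]
  have hpos : 0 < β * I + 2 * β * t + 2 * b * β + d := by positivity
  have haux : (4 * b * β * d - d ^ 2 + (8 * b * β + d) * s) * I * t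
      ≤ 8 * β * (β * I ^ 3 + (2 * b * β + d) * I ^ 2 + b ^ 2 * d) * t := by
    rw [hst]
    have hid : 8 * β * (β * I ^ 3 + (2 * b * β + d) * I ^ 2 + b ^ 2 * d) * t
        - (4 * b * β * d - d ^ 2 + (8 * b * β + d) * (4 * β * t + d)) * I * t
        = 8 * β * t * (I - t) ^ 2 * (β * I + 2 * β * t + 2 * b * β + d) := by
      linear_combination (4 * β * (3 * I * t - 2 * t ^ 2 - 2 * b * t)) * hR
    nlinarith [mul_nonneg (mul_nonneg (mul_nonneg (by positivity : (0:ℝ) ≤ 8 * β) ht.le)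
      (sq_nonneg (I - t))) hpos.le, hid]
  have hkey : (4 * b * β * d - d ^ 2 + (8 * b * β + d) * s) * I
      ≤ 8 * β * (β * I ^ 3 + (2 * b * β + d) * I ^ 2 + b ^ 2 * d) :=
    le_of_mul_le_mul_right haux ht
  rw [hΨ]
  have h1I := mul_lt_mul_of_pos_right h1 hI
  have h8 : (0:ℝ) < 8 * β := by positivity
  have hfin : 8 * β * 0 < 8 * β * (β * I ^ 3 + (2 * b * β + d) * I ^ 2
      + (b ^ 2 * β + 2 * b * d - b * μ1 + b * μ0) * I + b ^ 2 * d) := by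
    linarith [h1I, hkey]
  exact lt_of_mul_lt_mul_left hfin h8.le
end

section
/- If bβ + 2d < μ1 − μ0 and μ1 − μ0 > ω, then there exist real numbers 0 < Ǐ < Î such that Ψ(Ǐ) = Ψ(Î) = 0, Ψ'(Ǐ) < 0, Ψ'(Î) > 0 (where Ψ'(I) = 3βI² + 2(2bβ + d)I + (b²β + 2bd − bμ1 + bμ0)), Ψ(I) > 0 for I ∈ (0, Ǐ) ∪ (Î, ∞), and Ψ(I) < 0 for I ∈ (Ǐ, Î). -/
/-!
Write `m = μ1 - μ0`. Then `Ψ(I) = (I + b)²(βI + d) - bmI`, and `ω` is the minimum over `I > 0` of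
`(I + b)²(βI + d) / (bI)`, attained at the positive root `I⋆` of `2βI² + dI = bd`. So `ω < m`
says exactly that `Ψ(I⋆) < 0`; as `Ψ(0) = b²d > 0` and `Ψ → ∞`, there are roots `Ǐ < I⋆ < Î`.
By Vieta the third root is `-b²d / (βǏÎ) < 0`, so `ǏÎ Ψ(I) = (I - Ǐ)(I - Î)(βǏÎ I + b²d)`, from
which the signs of `Ψ` on `(0, ∞)` and of `Ψ'` at `Ǐ`, `Î` can be read off.
-/

open Filter Set Polynomial

section TwoRoots

variable {R : Type*} [CommRing R] [IsDomain R] {β A B C r₁ r₂ : R}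

/-- Vieta's formulas, with the third root `-C / (β r₁ r₂)` eliminated. -/
theorem mul_coeffs_eq_of_two_roots (h₁ : β * r₁ ^ 3 + A * r₁ ^ 2 + B * r₁ + C = 0)
    (h₂ : β * r₂ ^ 3 + A * r₂ ^ 2 + B * r₂ + C = 0) (hne : r₁ ≠ r₂) :
    r₁ * r₂ * A = C - β * r₁ * r₂ * (r₁ + r₂) ∧
      r₁ * r₂ * B = β * r₁ ^ 2 * r₂ ^ 2 - C * (r₁ + r₂) := by
  have hsub : r₁ - r₂ ≠ 0 := sub_ne_zero.mpr hne
  have hsum : β * (r₁ ^ 2 + r₁ * r₂ + r₂ ^ 2) + A * (r₁ + r₂) + B = 0 :=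
    mul_left_cancel₀ hsub (by linear_combination h₁ - h₂)
  have hA : r₁ * r₂ * A = C - β * r₁ * r₂ * (r₁ + r₂) :=
    mul_left_cancel₀ hsub (by linear_combination r₂ * h₁ - r₁ * h₂)
  exact ⟨hA, by linear_combination r₁ * r₂ * hsum - (r₁ + r₂) * hA⟩

theorem mul_cubic_eq_of_two_roots (h₁ : β * r₁ ^ 3 + A * r₁ ^ 2 + B * r₁ + C = 0)
    (h₂ : β * r₂ ^ 3 + A * r₂ ^ 2 + B * r₂ + C = 0) (hne : r₁ ≠ r₂) (x : R) :
    r₁ * r₂ * (β * x ^ 3 + A * x ^ 2 + B * x + C) =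
      (x - r₁) * (x - r₂) * (β * r₁ * r₂ * x + C) := by
  obtain ⟨hA, hB⟩ := mul_coeffs_eq_of_two_roots h₁ h₂ hne
  linear_combination x ^ 2 * hA + x * hB

theorem mul_cubic_deriv_eq_of_two_roots (h₁ : β * r₁ ^ 3 + A * r₁ ^ 2 + B * r₁ + C = 0)
    (h₂ : β * r₂ ^ 3 + A * r₂ ^ 2 + B * r₂ + C = 0) (hne : r₁ ≠ r₂) :
    r₁ * r₂ * (3 * β * r₁ ^ 2 + 2 * A * r₁ + B) = (r₁ - r₂) * (β * r₁ ^ 2 * r₂ + C) := by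
  obtain ⟨hA, hB⟩ := mul_coeffs_eq_of_two_roots h₁ h₂ hne
  linear_combination 2 * r₁ * hA + hB

end TwoRoots

section Signs

variable {K : Type*} [Field K] [LinearOrder K] [IsStrictOrderedRing K] {β A B C r₁ r₂ : K}

theorem cubic_pos_of_two_pos_roots (hβ : 0 < β) (hC : 0 < C)
    (h₁ : β * r₁ ^ 3 + A * r₁ ^ 2 + B * r₁ + C = 0)
    (h₂ : β * r₂ ^ 3 + A * r₂ ^ 2 + B * r₂ + C = 0) (hr₁ : 0 < r₁) (h₁₂ : r₁ < r₂) {x : K}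
    (hx : (0 < x ∧ x < r₁) ∨ r₂ < x) : 0 < β * x ^ 3 + A * x ^ 2 + B * x + C := by
  have hr₂ : 0 < r₂ := hr₁.trans h₁₂
  obtain ⟨hx₀, hprod⟩ : 0 < x ∧ 0 < (x - r₁) * (x - r₂) := by
    rcases hx with ⟨hx₀, hx₁⟩ | hx₂
    · exact ⟨hx₀, mul_pos_of_neg_of_neg (by linarith) (by linarith)⟩
    · exact ⟨hr₂.trans hx₂, mul_pos (by linarith) (by linarith)⟩
  refine pos_of_mul_pos_right ?_ (mul_pos hr₁ hr₂).le
  rw [mul_cubic_eq_of_two_roots h₁ h₂ h₁₂.ne]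
  exact mul_pos hprod (by positivity)

theorem cubic_neg_between_two_pos_roots (hβ : 0 < β) (hC : 0 < C)
    (h₁ : β * r₁ ^ 3 + A * r₁ ^ 2 + B * r₁ + C = 0)
    (h₂ : β * r₂ ^ 3 + A * r₂ ^ 2 + B * r₂ + C = 0) (hr₁ : 0 < r₁) {x : K}
    (hx₁ : r₁ < x) (hx₂ : x < r₂) : β * x ^ 3 + A * x ^ 2 + B * x + C < 0 := by
  have hx : 0 < x := hr₁.trans hx₁
  have hr₂ : 0 < r₂ := hx.trans hx₂
  refine neg_of_mul_neg_right ?_ (mul_pos hr₁ hr₂).le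
  rw [mul_cubic_eq_of_two_roots h₁ h₂ (hx₁.trans hx₂).ne]
  exact mul_neg_of_neg_of_pos (mul_neg_of_pos_of_neg (by linarith) (by linarith)) (by positivity)

theorem cubic_deriv_neg_at_smaller_root (hβ : 0 < β) (hC : 0 < C)
    (h₁ : β * r₁ ^ 3 + A * r₁ ^ 2 + B * r₁ + C = 0)
    (h₂ : β * r₂ ^ 3 + A * r₂ ^ 2 + B * r₂ + C = 0) (hr₁ : 0 < r₁) (h₁₂ : r₁ < r₂) :
    3 * β * r₁ ^ 2 + 2 * A * r₁ + B < 0 := by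
  have hr₂ : 0 < r₂ := hr₁.trans h₁₂
  refine neg_of_mul_neg_right ?_ (mul_pos hr₁ hr₂).le
  rw [mul_cubic_deriv_eq_of_two_roots h₁ h₂ h₁₂.ne]
  exact mul_neg_of_neg_of_pos (by linarith) (by positivity)

theorem cubic_deriv_pos_at_larger_root (hβ : 0 < β) (hC : 0 < C)
    (h₁ : β * r₁ ^ 3 + A * r₁ ^ 2 + B * r₁ + C = 0)
    (h₂ : β * r₂ ^ 3 + A * r₂ ^ 2 + B * r₂ + C = 0) (hr₁ : 0 < r₁) (h₁₂ : r₁ < r₂) :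
    0 < 3 * β * r₂ ^ 2 + 2 * A * r₂ + B := by
  have hr₂ : 0 < r₂ := hr₁.trans h₁₂
  refine pos_of_mul_pos_right ?_ (mul_pos hr₂ hr₁).le
  rw [mul_cubic_deriv_eq_of_two_roots h₂ h₁ h₁₂.ne']
  exact mul_pos (by linarith) (by positivity)

end Signs

theorem tendsto_cubic_atTop {a b c d : ℝ} (ha : 0 < a) :
    Tendsto (fun x : ℝ ↦ a * x ^ 3 + b * x ^ 2 + c * x + d) atTop atTop := by
  have hP := tendsto_atTop_of_leadingCoeff_nonneg (C a * X ^ 3 + C b * X ^ 2 + C c * X + C d)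
    (by rw [degree_cubic ha.ne']; norm_num) (by rw [leadingCoeff_cubic ha.ne']; exact ha.le)
  simpa using hP

theorem exists_root_between_and_beyond {f : ℝ → ℝ} (hf : Continuous f)
    (hlim : Tendsto f atTop atTop) {a c : ℝ} (hac : a ≤ c) (ha : 0 < f a) (hc : f c < 0) :
    ∃ r₁ r₂, r₁ ∈ Ioo a c ∧ c < r₂ ∧ f r₁ = 0 ∧ f r₂ = 0 := by
  obtain ⟨r₁, hr₁, hfr₁⟩ := intermediate_value_Ioo' hac hf.continuousOn ⟨hc, ha⟩
  obtain ⟨M, hfM, hcM⟩ := ((hlim.eventually_gt_atTop 0).and (eventually_ge_atTop c)).exists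
  obtain ⟨r₂, hr₂, hfr₂⟩ := intermediate_value_Ioo hcM hf.continuousOn ⟨hc, hfM⟩
  exact ⟨r₁, r₂, hr₁, hr₂.1, hfr₁, hfr₂⟩

/-- `I` is the critical point of `(I + b)² (βI + d) / I`, and the right-hand side is `8bβ ω I`
with `√(d (8bβ + d)³) = (8bβ + d)(4βI + d)`. -/
theorem sq_mul_add_eq_at_critical_point {R : Type*} [CommRing R] {β b d I : R}
    (hI : 2 * β * I ^ 2 + d * I = b * d) :
    8 * β * ((I + b) ^ 2 * (β * I + d)) =
      I * (8 * b ^ 2 * β ^ 2 + 20 * b * β * d - d ^ 2 + (8 * b * β + d) * (4 * β * I + d)) := by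
  linear_combination 4 * β * (I - 2 * b) * hI

theorem exists_pos_cubic_neg_of_lt {d β b μ0 μ1 : ℝ} (hd : 0 < d) (hβ : 0 < β) (hb : 0 < b)
    (hω : (8 * b ^ 2 * β ^ 2 + 20 * b * β * d - d ^ 2
      + Real.sqrt (d * (8 * b * β + d) ^ 3)) / (8 * b * β) < μ1 - μ0) :
    ∃ I, 0 < I ∧ β * I ^ 3 + (2 * b * β + d) * I ^ 2
      + (b ^ 2 * β + 2 * b * d - b * μ1 + b * μ0) * I + b ^ 2 * d < 0 := by
  set s := Real.sqrt (d * (8 * b * β + d))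
  have hs : s ^ 2 = d * (8 * b * β + d) := Real.sq_sqrt (by positivity)
  have hds : d < s := (Real.lt_sqrt hd.le).2 (by nlinarith [mul_pos (mul_pos hb hβ) hd])
  have hsqrt : Real.sqrt (d * (8 * b * β + d) ^ 3) = (8 * b * β + d) * s := by
    rw [show d * (8 * b * β + d) ^ 3 = (8 * b * β + d) ^ 2 * (d * (8 * b * β + d)) by ring,
      Real.sqrt_mul (by positivity), Real.sqrt_sq (by positivity)]
  rw [hsqrt] at hω
  set ω := (8 * b ^ 2 * β ^ 2 + 20 * b * β * d - d ^ 2 + (8 * b * β + d) * s) / (8 * b * β)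
  have hωdef : 8 * b * β * ω = 8 * b ^ 2 * β ^ 2 + 20 * b * β * d - d ^ 2 + (8 * b * β + d) * s := by
    simp only [ω]; field_simp
  set I := (s - d) / (4 * β)
  have hI : 0 < I := div_pos (by linarith) (by positivity)
  have hsI : 4 * β * I + d = s := by simp only [I]; field_simp; ring
  clear_value ω I s
  subst hsI
  have hcrit : 2 * β * I ^ 2 + d * I = b * d :=
    mul_left_cancel₀ (by positivity : (8 * β : ℝ) ≠ 0) (by linear_combination hs)
  refine ⟨I, hI, ?_⟩
  have hval : 8 * β * (β * I ^ 3 + (2 * b * β + d) * I ^ 2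
      + (b ^ 2 * β + 2 * b * d - b * μ1 + b * μ0) * I + b ^ 2 * d) =
        8 * b * β * I * (ω - (μ1 - μ0)) := by
    linear_combination sq_mul_add_eq_at_critical_point hcrit - I * hωdef
  refine neg_of_mul_neg_right ?_ (by positivity : (0 : ℝ) ≤ 8 * β)
  rw [hval]
  exact mul_neg_of_pos_of_neg (by positivity) (by linarith)

theorem stmt13_general (d β b μ0 μ1 : ℝ)
    (hd : 0 < d) (hβ : 0 < β) (hb : 0 < b)
    (Ψ Ψ' : ℝ → ℝ)
    (hΨ : ∀ I, Ψ I = β * I ^ 3 + (2 * b * β + d) * I ^ 2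
      + (b ^ 2 * β + 2 * b * d - b * μ1 + b * μ0) * I + b ^ 2 * d)
    (hΨ' : ∀ I, Ψ' I = 3 * β * I ^ 2 + 2 * (2 * b * β + d) * I
      + (b ^ 2 * β + 2 * b * d - b * μ1 + b * μ0))
    (ω : ℝ)
    (hω : ω = (8 * b ^ 2 * β ^ 2 + 20 * b * β * d - d ^ 2
      + Real.sqrt (d * (8 * b * β + d) ^ 3)) / (8 * b * β))
    (hcond2 : ω < μ1 - μ0) :
    ∃ Icheck Ihat : ℝ, 0 < Icheck ∧ Icheck < Ihat ∧
      Ψ Icheck = 0 ∧ Ψ Ihat = 0 ∧ Ψ' Icheck < 0 ∧ 0 < Ψ' Ihat ∧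
      (∀ I : ℝ, (0 < I ∧ I < Icheck) ∨ Ihat < I → 0 < Ψ I) ∧
      (∀ I : ℝ, Icheck < I → I < Ihat → Ψ I < 0) := by
  subst hω
  obtain ⟨I, hI, hΨI⟩ := exists_pos_cubic_neg_of_lt hd hβ hb hcond2
  have hΨfun : Ψ = _ := funext hΨ
  have hcont : Continuous Ψ := by rw [hΨfun]; fun_prop
  have hΨ0 : 0 < Ψ 0 := by rw [hΨ]; norm_num; positivity
  obtain ⟨r₁, r₂, ⟨hr₁, hr₁I⟩, hIr₂, h₁, h₂⟩ := exists_root_between_and_beyond hcont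
    (hΨfun ▸ tendsto_cubic_atTop hβ) hI.le hΨ0 (hΨ I ▸ hΨI)
  have h₁₂ : r₁ < r₂ := by linarith
  have hC : 0 < b ^ 2 * d := by positivity
  rw [hΨ] at h₁ h₂
  refine ⟨r₁, r₂, hr₁, h₁₂, hΨ r₁ ▸ h₁, hΨ r₂ ▸ h₂, ?_, ?_, fun x hx ↦ ?_, fun x hx₁ hx₂ ↦ ?_⟩
  · rw [hΨ']; exact cubic_deriv_neg_at_smaller_root hβ hC h₁ h₂ hr₁ h₁₂
  · rw [hΨ']; exact cubic_deriv_pos_at_larger_root hβ hC h₁ h₂ hr₁ h₁₂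
  · rw [hΨ]; exact cubic_pos_of_two_pos_roots hβ hC h₁ h₂ hr₁ h₁₂ hx
  · rw [hΨ]; exact cubic_neg_between_two_pos_roots hβ hC h₁ h₂ hr₁ hx₁ hx₂

/-- If `bβ + 2d < μ1 − μ0` and `μ1 − μ0 > ω`, then there exist
`0 < Ǐ < Î` with `Ψ(Ǐ) = Ψ(Î) = 0`, `Ψ'(Ǐ) < 0`, `Ψ'(Î) > 0`,
`Ψ(I) > 0` on `(0, Ǐ) ∪ (Î, ∞)` and `Ψ(I) < 0` on `(Ǐ, Î)`. -/
theorem stmt13 (d β b μ0 μ1 : ℝ)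
    (hd : 0 < d) (hβ : 0 < β) (hb : 0 < b)
    (hμ0 : 0 < μ0) (hμ1 : 0 < μ1) (hμ : μ0 < μ1)
    (Ψ Ψ' : ℝ → ℝ)
    (hΨ : ∀ I, Ψ I = β * I ^ 3 + (2 * b * β + d) * I ^ 2
      + (b ^ 2 * β + 2 * b * d - b * μ1 + b * μ0) * I + b ^ 2 * d)
    (hΨ' : ∀ I, Ψ' I = 3 * β * I ^ 2 + 2 * (2 * b * β + d) * I
      + (b ^ 2 * β + 2 * b * d - b * μ1 + b * μ0))
    (ω : ℝ)
    (hω : ω = (8 * b ^ 2 * β ^ 2 + 20 * b * β * d - d ^ 2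
      + Real.sqrt (d * (8 * b * β + d) ^ 3)) / (8 * b * β))
    (hcond1 : b * β + 2 * d < μ1 - μ0)
    (hcond2 : ω < μ1 - μ0) :
    ∃ Icheck Ihat : ℝ, 0 < Icheck ∧ Icheck < Ihat ∧
      Ψ Icheck = 0 ∧ Ψ Ihat = 0 ∧ Ψ' Icheck < 0 ∧ 0 < Ψ' Ihat ∧
      (∀ I : ℝ, (0 < I ∧ I < Icheck) ∨ Ihat < I → 0 < Ψ I) ∧
      (∀ I : ℝ, Icheck < I → I < Ihat → Ψ I < 0) :=
  stmt13_general d β b μ0 μ1 hd hβ hb Ψ Ψ' hΨ hΨ' ω hω hcond2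
end

section
/- Define Δ̃(w) = 4bβ·w² + (d² − 20dbβ − 8b²β²)·w + 4(bβ − d)³ for w ∈ ℝ. Then Δ̃(bβ + 2d) = −d(2d² + 11dbβ + 32b²β²), which is strictly negative; consequently the quadratic Δ̃ has two distinct real roots, one strictly less than bβ + 2d and one strictly greater than bβ + 2d. -/
/-! A quadratic `f` with leading coefficient `a > 0` and `f(p) < 0` has discriminant
`(2ap + b)² - 4a·f(p) > (2ap + b)²`, so its roots `(-b ± √disc) / 2a` lie on either side of `p`. -/

theorem discrim_eq_sq_sub_eval (a b c p : ℝ) :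
    discrim a b c = (2 * a * p + b) ^ 2 - 4 * a * (a * p ^ 2 + b * p + c) := by
  unfold discrim; ring

theorem exists_roots_lt_gt_of_eval_neg {a b c p : ℝ} (ha : 0 < a)
    (hp : a * p ^ 2 + b * p + c < 0) :
    ∃ w₁ w₂ : ℝ, w₁ < p ∧ p < w₂ ∧
      a * w₁ ^ 2 + b * w₁ + c = 0 ∧ a * w₂ ^ 2 + b * w₂ + c = 0 := by
  have hsq : (2 * a * p + b) ^ 2 < discrim a b c := by
    rw [discrim_eq_sq_sub_eval a b c p]; nlinarith
  set s := √(discrim a b c)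
  have hs : |2 * a * p + b| < s := (Real.lt_sqrt (abs_nonneg _)).2 (by rwa [sq_abs])
  have hroot : ∀ x, a * x ^ 2 + b * x + c = 0 ↔ x = (-b + s) / (2 * a) ∨ x = (-b - s) / (2 * a) :=
    by simpa only [sq] using
      quadratic_eq_zero_iff ha.ne' (Real.mul_self_sqrt (by nlinarith [sq_nonneg (2 * a * p + b)])).symm
  obtain ⟨hlo, hhi⟩ := abs_lt.1 hs
  refine ⟨(-b - s) / (2 * a), (-b + s) / (2 * a), ?_, ?_,
    (hroot _).2 (Or.inr rfl), (hroot _).2 (Or.inl rfl)⟩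
  · rw [div_lt_iff₀ (by positivity)]; linarith
  · rw [lt_div_iff₀ (by positivity)]; linarith

/-- For `Δ̃(w) = 4bβ·w² + (d² − 20dbβ − 8b²β²)·w + 4(bβ − d)³`,
one has `Δ̃(bβ + 2d) = −d(2d² + 11dbβ + 32b²β²) < 0`; consequently the
quadratic `Δ̃` has two distinct real roots, one strictly less than `bβ + 2d`
and one strictly greater than `bβ + 2d`. -/
theorem stmt14 (d β b : ℝ)
    (hd : 0 < d) (hβ : 0 < β) (hb : 0 < b)
    (Δtilde : ℝ → ℝ)
    (hΔtilde : ∀ w, Δtilde w = 4 * b * β * w ^ 2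
      + (d ^ 2 - 20 * d * b * β - 8 * b ^ 2 * β ^ 2) * w
      + 4 * (b * β - d) ^ 3) :
    Δtilde (b * β + 2 * d)
        = -(d * (2 * d ^ 2 + 11 * d * b * β + 32 * b ^ 2 * β ^ 2)) ∧
    Δtilde (b * β + 2 * d) < 0 ∧
    ∃ w1 w2 : ℝ, w1 < b * β + 2 * d ∧ b * β + 2 * d < w2 ∧
      Δtilde w1 = 0 ∧ Δtilde w2 = 0 := by
  have hval : Δtilde (b * β + 2 * d)
      = -(d * (2 * d ^ 2 + 11 * d * b * β + 32 * b ^ 2 * β ^ 2)) := by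
    rw [hΔtilde]; ring
  have hneg : Δtilde (b * β + 2 * d) < 0 := by
    rw [hval]; exact neg_neg_of_pos (by positivity)
  rw [hΔtilde] at hneg
  obtain ⟨w₁, w₂, hw₁, hw₂, hroot₁, hroot₂⟩ :=
    exists_roots_lt_gt_of_eval_neg (by positivity) hneg
  rw [← hΔtilde] at hneg hroot₁ hroot₂
  exact ⟨hval, hneg, w₁, w₂, hw₁, hw₂, hroot₁, hroot₂⟩
end

section
/- For every I > 0, the trace of J0(S(I), I) equals −Ψ(I)/(I + b)². Moreover, if I > 0 satisfies f(I) = 0, f'(I) > 0 (where f'(I) = 2A2·I + A1), and Ψ(I) > 0, then every complex eigenvalue of the matrix J0(S(I), I) has strictly negative real part. -/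
/-!
Along the curve `S = S(I)` the Jacobian `J₀` has trace `-Ψ(I)/(I + b)²` and determinant
`I·f'(I)/(I + b) - I·f(I)/(I + b)²`. At an equilibrium (`f(I) = 0`) with `f'(I) > 0` and
`Ψ(I) > 0` the trace is therefore negative and the determinant positive, and for a real
`2 × 2` matrix this forces both eigenvalues, roots of `μ² - (tr J₀) μ + det J₀`, into the open
left half-plane.
-/

theorem Complex.re_neg_of_sq_sub_mul_add_eq_zero {T D : ℝ} (hT : T < 0) (hD : 0 < D) {z : ℂ}
    (hz : z ^ 2 - T * z + D = 0) : z.re < 0 := by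
  have hre : z.re ^ 2 - z.im ^ 2 - T * z.re + D = 0 := by
    simpa [sq] using congrArg Complex.re hz
  have him : z.im * (2 * z.re - T) = 0 := by
    have := congrArg Complex.im hz
    simp only [sq, add_im, sub_im, mul_im, ofReal_re, ofReal_im, zero_mul, add_zero,
      zero_im] at this
    linear_combination this
  by_contra! hx
  have hy : z.im = 0 := (mul_eq_zero.mp him).resolve_right (by linarith)
  rw [hy] at hre
  nlinarith [mul_nonneg (neg_nonneg.mpr hT.le) hx]

theorem Matrix.sq_sub_trace_mul_add_det_fin_two {R : Type*} [CommRing R] [IsDomain R]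
    (M : Matrix (Fin 2) (Fin 2) R) {μ : R} {v : Fin 2 → R} (hv : v ≠ 0)
    (hμ : M.mulVec v = μ • v) : μ ^ 2 - M.trace * μ + M.det = 0 := by
  have hker : (M - μ • 1).mulVec v = 0 := by
    rw [sub_mulVec, smul_mulVec, one_mulVec, hμ, sub_self]
  have hdet : (M - μ • 1).det = 0 := exists_mulVec_eq_zero_iff.mp ⟨v, hv, hker⟩
  rw [det_fin_two] at hdet
  simp only [sub_apply, smul_apply, one_apply_eq, one_apply_ne, smul_eq_mul, mul_one, mul_zero,
    sub_zero, ne_eq, zero_ne_one, one_ne_zero, not_false_eq_true] at hdet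
  rw [trace_fin_two, det_fin_two]
  linear_combination hdet

theorem Matrix.re_lt_zero_of_trace_neg_of_det_pos_fin_two (M : Matrix (Fin 2) (Fin 2) ℝ)
    (hT : M.trace < 0) (hD : 0 < M.det) {μ : ℂ} {v : Fin 2 → ℂ} (hv : v ≠ 0)
    (hμ : (M.map (fun x : ℝ => (x : ℂ))).mulVec v = μ • v) : μ.re < 0 := by
  apply Complex.re_neg_of_sq_sub_mul_add_eq_zero hT hD
  have := sq_sub_trace_mul_add_det_fin_two _ hv hμ
  rw [trace_fin_two, det_fin_two] at this ⊢
  simpa using this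

theorem stmt15_general (A d β b μ0 μ1 : ℝ)
    (hd : 0 < d) (hb : 0 < b)
    (hμ1 : 0 < μ1)
    (R0 : ℝ) (hR0 : R0 = β * A / (d * (d + μ1)))
    (A2 A1 A0 : ℝ)
    (hA2 : A2 = (d + μ0) * β)
    (hA1 : A1 = d ^ 2 + (b * β + μ0) * d + (b * μ1 - A) * β)
    (hA0 : A0 = b * d * (d + μ1) * (1 - R0))
    (f f' h h' Ψ : ℝ → ℝ)
    (hf : ∀ I, f I = A2 * I ^ 2 + A1 * I + A0)
    (hf' : ∀ I, f' I = 2 * A2 * I + A1)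
    (hh : ∀ I, h I = μ0 + (μ1 - μ0) * b / (I + b))
    (hh' : ∀ I, h' I = -((μ1 - μ0) * b / (I + b) ^ 2))
    (hΨ : ∀ I, Ψ I = β * I ^ 3 + (2 * b * β + d) * I ^ 2
      + (b ^ 2 * β + 2 * b * d - b * μ1 + b * μ0) * I + b ^ 2 * d)
    (J : ℝ → Matrix (Fin 2) (Fin 2) ℝ)
    (hJ : ∀ I, J I = !![-(d + β * I), -(h I + d); β * I, -(h' I * I)]) :
    (∀ I : ℝ, 0 < I → (J I).trace = -Ψ I / (I + b) ^ 2) ∧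
    (∀ I : ℝ, 0 < I → f I = 0 → 0 < f' I → 0 < Ψ I →
      ∀ μ : ℂ, (∃ v : Fin 2 → ℂ, v ≠ 0 ∧
        ((J I).map (fun x : ℝ => (x : ℂ))).mulVec v = μ • v) → μ.re < 0) := by
  have htrace : ∀ I : ℝ, 0 < I → (J I).trace = -Ψ I / (I + b) ^ 2 := by
    intro I hI
    have : I + b ≠ 0 := by positivity
    rw [hJ, Matrix.trace_fin_two_of, hh', hΨ]
    field_simp
    ring
  refine ⟨htrace, fun I hI hfI hf'I hΨI μ ⟨v, hv, hμ⟩ => ?_⟩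
  have hIb : 0 < I + b := by positivity
  have hdet : (J I).det * (I + b) ^ 2 = f' I * (I * (I + b)) - I * f I := by
    have : d * (d + μ1) ≠ 0 := by positivity
    rw [hJ, Matrix.det_fin_two_of, hh, hh', hf', hf, hA2, hA1, hA0, hR0]
    field_simp
    ring
  refine (J I).re_lt_zero_of_trace_neg_of_det_pos_fin_two ?_ ?_ hv hμ
  · rw [htrace I hI, neg_div, neg_lt_zero]
    positivity
  · rw [hfI, mul_zero, sub_zero] at hdet
    have : 0 < (J I).det * (I + b) ^ 2 := hdet ▸ by positivity
    exact pos_of_mul_pos_left this (by positivity)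

/-- For every `I > 0`, the trace of `J₀(S(I), I)` equals
`−Ψ(I)/(I + b)²`. Moreover, if `I > 0` satisfies `f(I) = 0`, `f'(I) > 0`
(where `f'(I) = 2A₂·I + A₁`) and `Ψ(I) > 0`, then every complex eigenvalue
of the matrix `J₀(S(I), I)` has strictly negative real part. -/
theorem stmt15 (A d β b μ0 μ1 : ℝ)
    (hA : 0 < A) (hd : 0 < d) (hβ : 0 < β) (hb : 0 < b)
    (hμ0 : 0 < μ0) (hμ1 : 0 < μ1) (hμ : μ0 < μ1)
    (R0 : ℝ) (hR0 : R0 = β * A / (d * (d + μ1)))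
    (A2 A1 A0 : ℝ)
    (hA2 : A2 = (d + μ0) * β)
    (hA1 : A1 = d ^ 2 + (b * β + μ0) * d + (b * μ1 - A) * β)
    (hA0 : A0 = b * d * (d + μ1) * (1 - R0))
    (f f' h h' Ψ : ℝ → ℝ)
    (hf : ∀ I, f I = A2 * I ^ 2 + A1 * I + A0)
    (hf' : ∀ I, f' I = 2 * A2 * I + A1)
    (hh : ∀ I, h I = μ0 + (μ1 - μ0) * b / (I + b))
    (hh' : ∀ I, h' I = -((μ1 - μ0) * b / (I + b) ^ 2))
    (hΨ : ∀ I, Ψ I = β * I ^ 3 + (2 * b * β + d) * I ^ 2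
      + (b ^ 2 * β + 2 * b * d - b * μ1 + b * μ0) * I + b ^ 2 * d)
    (J : ℝ → Matrix (Fin 2) (Fin 2) ℝ)
    (hJ : ∀ I, J I = !![-(d + β * I), -(h I + d); β * I, -(h' I * I)]) :
    (∀ I : ℝ, 0 < I → (J I).trace = -Ψ I / (I + b) ^ 2) ∧
    (∀ I : ℝ, 0 < I → f I = 0 → 0 < f' I → 0 < Ψ I →
      ∀ μ : ℂ, (∃ v : Fin 2 → ℂ, v ≠ 0 ∧
        ((J I).map (fun x : ℝ => (x : ℂ))).mulVec v = μ • v) → μ.re < 0) :=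
  stmt15_general A d β b μ0 μ1 hd hb hμ1 R0 hR0 A2 A1 A0 hA2 hA1 hA0 f f' h h' Ψ hf hf' hh hh' hΨ J
    hJ
end

section
/- Let δ1 < 0, δ2 < 0, δ3 > 0, δ4 > 0 be real numbers with δ1δ4 − δ2δ3 > 0, and let r1, r2, ℓ > 0. If r2/r1 > γ_−, then D_k(r1) > 0 for every integer k ≥ 1; and if r2/r1 = γ_−, then D_k(r1) ≥ 0 for every integer k ≥ 1. -/
set_option maxHeartbeats 2000000 in
/-- Let `δ1 < 0`, `δ2 < 0`, `δ3 > 0`, `δ4 > 0` with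
`δ1δ4 − δ2δ3 > 0`, and let `r1, r2, ℓ > 0`. If `r2/r1 > γ₋`, then
`D_k(r1) > 0` for every integer `k ≥ 1`; and if `r2/r1 = γ₋`, then
`D_k(r1) ≥ 0` for every integer `k ≥ 1`. Here
`D_k(r1) = (r1r2/ℓ⁴)k⁴ − ((δ1r2 + δ4r1)/ℓ²)k² + δ1δ4 − δ2δ3`. -/
theorem stmt18 (δ1 δ2 δ3 δ4 r1 r2 ℓ : ℝ)
    (hδ1 : δ1 < 0) (hδ2 : δ2 < 0) (hδ3 : 0 < δ3) (hδ4 : 0 < δ4)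
    (hdet : 0 < δ1 * δ4 - δ2 * δ3)
    (hr1 : 0 < r1) (hr2 : 0 < r2) (hℓ : 0 < ℓ)
    (γm : ℝ)
    (hγm : γm = (δ1 * δ4 - 2 * δ2 * δ3
      - 2 * Real.sqrt (-(δ2 * δ3) * (δ1 * δ4 - δ2 * δ3))) / δ1 ^ 2)
    (D : ℕ → ℝ)
    (hD : ∀ k : ℕ, D k = r1 * r2 / ℓ ^ 4 * (k : ℝ) ^ 4
      - (δ1 * r2 + δ4 * r1) / ℓ ^ 2 * (k : ℝ) ^ 2 + δ1 * δ4 - δ2 * δ3) :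
    (γm < r2 / r1 → ∀ k : ℕ, 1 ≤ k → 0 < D k) ∧
    (r2 / r1 = γm → ∀ k : ℕ, 1 ≤ k → 0 ≤ D k) := by
  have hδ1sq : 0 < δ1 ^ 2 := by nlinarith
  have hℓ0 : (ℓ : ℝ) ≠ 0 := ne_of_gt hℓ
  set s := Real.sqrt (-(δ2 * δ3) * (δ1 * δ4 - δ2 * δ3)) with hsdef
  have hprod : 0 < -(δ2 * δ3) * (δ1 * δ4 - δ2 * δ3) := by
    apply mul_pos
    · nlinarith
    · exact hdet
  have hs2 : s ^ 2 = -(δ2 * δ3) * (δ1 * δ4 - δ2 * δ3) := Real.sq_sqrt hprod.le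
  have hs0 : 0 < s := Real.sqrt_pos.mpr hprod
  -- rewrite D k in terms of x = k²/ℓ²
  have hDk : ∀ k : ℕ, D k = r1 * r2 * ((k : ℝ) ^ 2 / ℓ ^ 2) ^ 2
      - (δ1 * r2 + δ4 * r1) * ((k : ℝ) ^ 2 / ℓ ^ 2) + (δ1 * δ4 - δ2 * δ3) := by
    intro k
    rw [hD k]
    field_simp
    ring
  constructor
  · -- strict case
    intro hγ k hk
    have hk1 : (1 : ℝ) ≤ (k : ℝ) := by exact_mod_cast hk
    set x := (k : ℝ) ^ 2 / ℓ ^ 2 with hxdef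
    have hx : 0 < x := by
      apply div_pos _ (by positivity)
      nlinarith
    have hDkx : D k = r1 * r2 * x ^ 2
        - (δ1 * r2 + δ4 * r1) * x + (δ1 * δ4 - δ2 * δ3) := hDk k
    have hineq1 : (δ1 * δ4 - 2 * δ2 * δ3 - 2 * s) * r1 < δ1 ^ 2 * r2 := by
      have := (div_lt_div_iff₀ hδ1sq hr1).mp (by rw [hγm] at hγ; exact hγ)
      -- hγ : (M - 2s)/δ1^2 < r2/r1
      nlinarith [this]
    rcases le_or_gt (δ1 * r2 + δ4 * r1) 0 with hB | hB
    · rw [hDkx]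
      nlinarith [mul_pos (mul_pos hr1 hr2) (mul_pos hx hx),
        mul_nonneg (neg_nonneg.mpr hB) hx.le]
    · -- B > 0 case: show discriminant negative
      have h3 : δ1 ^ 2 * r2 < -(δ1 * δ4) * r1 := by
        have := mul_neg_of_neg_of_pos hδ1 hB
        nlinarith [this]
      have h2 : δ1 ^ 2 * r2 - (δ1 * δ4 - 2 * δ2 * δ3) * r1 < 2 * s * r1 := by
        nlinarith [h3, mul_pos hdet hr1, mul_pos hs0 hr1]
      have h1 : -(2 * s * r1) < δ1 ^ 2 * r2 - (δ1 * δ4 - 2 * δ2 * δ3) * r1 := by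
        nlinarith [hineq1]
      have hdisc : (δ1 * r2 + δ4 * r1) ^ 2
          < 4 * (r1 * r2) * (δ1 * δ4 - δ2 * δ3) := by
        have hprod2 : 0 < (2 * s * r1 - (δ1 ^ 2 * r2 - (δ1 * δ4 - 2 * δ2 * δ3) * r1))
            * (δ1 ^ 2 * r2 - (δ1 * δ4 - 2 * δ2 * δ3) * r1 + 2 * s * r1) :=
          mul_pos (by linarith) (by linarith)
        have hs2r : s ^ 2 * r1 ^ 2 = -(δ2 * δ3) * (δ1 * δ4 - δ2 * δ3) * r1 ^ 2 := by
          rw [hs2]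
        nlinarith [hprod2, hs2r, hδ1sq]
      have hA : 0 < r1 * r2 := mul_pos hr1 hr2
      have h4AD : 0 < 4 * (r1 * r2) * (r1 * r2 * x ^ 2
          - (δ1 * r2 + δ4 * r1) * x + (δ1 * δ4 - δ2 * δ3)) := by
        nlinarith [sq_nonneg (2 * (r1 * r2) * x - (δ1 * r2 + δ4 * r1)), hdisc]
      rw [hDkx]
      nlinarith [h4AD, hA]
  · -- equality case
    intro hγ k hk
    have hk1 : (1 : ℝ) ≤ (k : ℝ) := by exact_mod_cast hk
    set x := (k : ℝ) ^ 2 / ℓ ^ 2 with hxdef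
    have hx : 0 < x := by
      apply div_pos _ (by positivity)
      nlinarith
    have hDkx : D k = r1 * r2 * x ^ 2
        - (δ1 * r2 + δ4 * r1) * x + (δ1 * δ4 - δ2 * δ3) := hDk k
    have heq : δ1 ^ 2 * r2 = (δ1 * δ4 - 2 * δ2 * δ3 - 2 * s) * r1 := by
      have hg2 : γm * δ1 ^ 2 = δ1 * δ4 - 2 * δ2 * δ3 - 2 * s := by
        rw [hγm]; field_simp [hδ1.ne]
      have hr2eq : r2 = γm * r1 := (div_eq_iff hr1.ne').mp hγ
      calc δ1 ^ 2 * r2 = (γm * δ1 ^ 2) * r1 := by rw [hr2eq]; ring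
        _ = (δ1 * δ4 - 2 * δ2 * δ3 - 2 * s) * r1 := by rw [hg2]
    have hdisc : (δ1 * r2 + δ4 * r1) ^ 2
        ≤ 4 * (r1 * r2) * (δ1 * δ4 - δ2 * δ3) := by
      have hE : δ1 ^ 2 * r2 - (δ1 * δ4 - 2 * δ2 * δ3) * r1 = -(2 * s * r1) := by
        linarith [heq]
      have hEsq : (δ1 ^ 2 * r2 - (δ1 * δ4 - 2 * δ2 * δ3) * r1) ^ 2
          = 4 * (s ^ 2 * r1 ^ 2) := by rw [hE]; ring
      have hs2r : s ^ 2 * r1 ^ 2 = -(δ2 * δ3) * (δ1 * δ4 - δ2 * δ3) * r1 ^ 2 := by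
        rw [hs2]
      nlinarith [hEsq, hs2r, hδ1sq]
    have hA : 0 < r1 * r2 := mul_pos hr1 hr2
    have h4AD : 0 ≤ 4 * (r1 * r2) * (r1 * r2 * x ^ 2
        - (δ1 * r2 + δ4 * r1) * x + (δ1 * δ4 - δ2 * δ3)) := by
      nlinarith [sq_nonneg (2 * (r1 * r2) * x - (δ1 * r2 + δ4 * r1)), hdisc]
    rw [hDkx]
    nlinarith [h4AD, hA]
end

section
/- Let δ1 < 0, δ2 < 0, δ3 > 0, δ4 > 0 be real numbers with δ1δ4 − δ2δ3 > 0, let r2, ℓ > 0, and let k ≥ 1 be an integer with k²·r2 < δ4·ℓ². Define r1^(k) = (δ1δ4 − δ2δ3 − δ1·r2·k²/ℓ²) / ((k²/ℓ²)(δ4 − r2·k²/ℓ²)). Then r1^(k) > 0; for every r1 > 0, D_k(r1) > 0 if and only if r1 < r1^(k), D_k(r1) < 0 if and only if r1 > r1^(k), and D_k(r1^(k)) = 0; moreover the derivative of r1 ↦ D_k(r1) is the constant (r2·k² − δ4·ℓ²)·k²/ℓ⁴, which is strictly negative. -/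
/-- Let `δ1 < 0`, `δ2 < 0`, `δ3 > 0`, `δ4 > 0` with
`δ1δ4 − δ2δ3 > 0`, let `r2, ℓ > 0`, and let `k ≥ 1` be an integer with
`k²r2 < δ4ℓ²`. Define
`r1^(k) = (δ1δ4 − δ2δ3 − δ1r2k²/ℓ²) / ((k²/ℓ²)(δ4 − r2k²/ℓ²))`. Then
`r1^(k) > 0`; for every `r1 > 0`, `D_k(r1) > 0 ↔ r1 < r1^(k)`,
`D_k(r1) < 0 ↔ r1 > r1^(k)`, and `D_k(r1^(k)) = 0`; moreover the derivative
of `r1 ↦ D_k(r1)` is the constant `(r2k² − δ4ℓ²)k²/ℓ⁴ < 0`. -/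
theorem stmt19 (δ1 δ2 δ3 δ4 r2 ℓ : ℝ)
    (hδ1 : δ1 < 0) (hδ2 : δ2 < 0) (hδ3 : 0 < δ3) (hδ4 : 0 < δ4)
    (hdet : 0 < δ1 * δ4 - δ2 * δ3)
    (hr2 : 0 < r2) (hℓ : 0 < ℓ)
    (k : ℕ) (hk : 1 ≤ k) (hkr2 : (k : ℝ) ^ 2 * r2 < δ4 * ℓ ^ 2)
    (D : ℝ → ℝ)
    (hD : ∀ r1 : ℝ, D r1 = r1 * r2 / ℓ ^ 4 * (k : ℝ) ^ 4
      - (δ1 * r2 + δ4 * r1) / ℓ ^ 2 * (k : ℝ) ^ 2 + δ1 * δ4 - δ2 * δ3)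
    (r1k : ℝ)
    (hr1k : r1k = (δ1 * δ4 - δ2 * δ3 - δ1 * r2 * (k : ℝ) ^ 2 / ℓ ^ 2)
      / ((k : ℝ) ^ 2 / ℓ ^ 2 * (δ4 - r2 * (k : ℝ) ^ 2 / ℓ ^ 2))) :
    0 < r1k ∧
    (∀ r1 : ℝ, 0 < r1 →
      (0 < D r1 ↔ r1 < r1k) ∧ (D r1 < 0 ↔ r1k < r1)) ∧
    D r1k = 0 ∧
    (∀ r1 : ℝ, HasDerivAt D
      ((r2 * (k : ℝ) ^ 2 - δ4 * ℓ ^ 2) * (k : ℝ) ^ 2 / ℓ ^ 4) r1) ∧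
    (r2 * (k : ℝ) ^ 2 - δ4 * ℓ ^ 2) * (k : ℝ) ^ 2 / ℓ ^ 4 < 0 := by
  have hℓ2 : (0:ℝ) < ℓ ^ 2 := by positivity
  have hk0 : (0:ℝ) < (k : ℝ) := by exact_mod_cast Nat.pos_of_ne_zero (by omega)
  have hk2 : (0:ℝ) < (k : ℝ) ^ 2 := by positivity
  set c : ℝ := (k : ℝ) ^ 2 / ℓ ^ 2 * (δ4 - r2 * (k : ℝ) ^ 2 / ℓ ^ 2) with hc
  have hcpos : 0 < c := by
    apply mul_pos (by positivity)
    rw [sub_pos, div_lt_iff₀ hℓ2]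
    nlinarith
  have hnum : 0 < δ1 * δ4 - δ2 * δ3 - δ1 * r2 * (k : ℝ) ^ 2 / ℓ ^ 2 := by
    have : δ1 * r2 * (k : ℝ) ^ 2 / ℓ ^ 2 < 0 := by
      apply div_neg_of_neg_of_pos _ hℓ2
      nlinarith [mul_pos hr2 hk2]
    linarith
  have hr1kpos : 0 < r1k := by rw [hr1k]; exact div_pos hnum hcpos
  have hcr1k : c * r1k = δ1 * δ4 - δ2 * δ3 - δ1 * r2 * (k : ℝ) ^ 2 / ℓ ^ 2 := by
    rw [hr1k, mul_div_cancel₀ _ (ne_of_gt hcpos)]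
  have key : ∀ r1 : ℝ, D r1 = c * (r1k - r1) := by
    intro r1
    rw [hD, mul_sub, hcr1k, hc]
    field_simp
    ring
  refine ⟨hr1kpos, ?_, ?_, ?_, ?_⟩
  · intro r1 _
    constructor
    · rw [key]
      constructor
      · intro h
        by_contra h'
        push_neg at h'
        nlinarith
      · intro h; exact mul_pos hcpos (by linarith)
    · rw [key]
      constructor
      · intro h
        by_contra h'
        push_neg at h'
        nlinarith
      · intro h
        have : r1k - r1 < 0 := by linarith
        exact mul_neg_of_pos_of_neg hcpos this
  · rw [key]; ring
  · intro r1
    have hfun : D = fun x : ℝ => (r2 / ℓ ^ 4 * (k : ℝ) ^ 4 - δ4 / ℓ ^ 2 * (k : ℝ) ^ 2) * x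
        + (- (δ1 * r2) / ℓ ^ 2 * (k : ℝ) ^ 2 + δ1 * δ4 - δ2 * δ3) := by
      funext x; rw [hD]; ring
    have hslope : (r2 * (k : ℝ) ^ 2 - δ4 * ℓ ^ 2) * (k : ℝ) ^ 2 / ℓ ^ 4
        = r2 / ℓ ^ 4 * (k : ℝ) ^ 4 - δ4 / ℓ ^ 2 * (k : ℝ) ^ 2 := by
      field_simp
    rw [hfun, hslope]
    simpa using ((hasDerivAt_id r1).const_mul
      (r2 / ℓ ^ 4 * (k : ℝ) ^ 4 - δ4 / ℓ ^ 2 * (k : ℝ) ^ 2)).add_const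
      (- (δ1 * r2) / ℓ ^ 2 * (k : ℝ) ^ 2 + δ1 * δ4 - δ2 * δ3)
  · apply div_neg_of_neg_of_pos _ (by positivity)
    nlinarith
end
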